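/- arXiv:1205.1462 — 5 statements merged into one kernel-verified Lean document; each statement's English description precedes it below -/
import Mathlib

section
/- Let q, n be positive integers and 0 ≤ ε < 1 a real number. Let C ⊆ [q]^n be a code such that any two distinct codewords have Hamming distance at least (1 − ε)·n. Then C is (1 − √ε, 2qn)-list decodable: for every z ∈ [q]^n, the number of codewords c ∈ C with Δ(c, z) ≤ (1 − √ε)·n is at most 2qn. -/
/-!
Send each codeword `c` to `oneHot c - √ε • oneHot z` in `ℝ^(n × q)`; since
`⟪oneHot x, oneHot y⟫ = n - Δ(x, y)`, the distance hypothesis and the radius `(1 - √ε) n` make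
the vectors coming from the list pairwise at non-positive inner product, and `√ε < 1` makes them
nonzero. In `ℝ^d` such a family has at most `2d` members: project the others onto the
orthogonal complement of one member, which keeps inner products non-positive and is injective,
and induct on `d`.
-/

open Module RealInnerProductSpace Finset

section OrthogonalPart

variable {E : Type*} [NormedAddCommGroup E] [InnerProductSpace ℝ E]

noncomputable def orthogonalPart (v u : E) : E := u - (⟪v, u⟫ / ⟪v, v⟫) • v

theorem orthogonalPart_mem_orthogonal (v u : E) : orthogonalPart v u ∈ (ℝ ∙ v)ᗮ := by
  rw [Submodule.mem_orthogonal_singleton_iff_inner_right, orthogonalPart, inner_sub_right,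
    real_inner_smul_right]
  rcases eq_or_ne v 0 with rfl | hv
  · simp
  · rw [div_mul_cancel₀ _ (inner_self_ne_zero.mpr hv), sub_self]

theorem inner_eq_inner_orthogonalPart_add (v u w : E) :
    ⟪u, w⟫ = ⟪orthogonalPart v u, orthogonalPart v w⟫ + ⟪v, u⟫ * ⟪v, w⟫ / ⟪v, v⟫ := by
  rcases eq_or_ne v 0 with rfl | hv
  · simp [orthogonalPart]
  have hvv : ⟪v, v⟫ ≠ 0 := inner_self_ne_zero.mpr hv
  simp only [orthogonalPart, inner_sub_left, inner_sub_right, real_inner_smul_left,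
    real_inner_smul_right, real_inner_comm u v]
  field_simp
  ring

variable {v u w : E}

theorem orthogonalPart_eq_self (h : ⟪v, u⟫ = 0) : orthogonalPart v u = u := by
  simp [orthogonalPart, h]

theorem inner_orthogonalPart_nonpos (hu : ⟪v, u⟫ ≤ 0) (hw : ⟪v, w⟫ ≤ 0) (huw : ⟪u, w⟫ ≤ 0) :
    ⟪orthogonalPart v u, orthogonalPart v w⟫ ≤ 0 := by
  have : 0 ≤ ⟪v, u⟫ * ⟪v, w⟫ / ⟪v, v⟫ :=
    div_nonneg (mul_nonneg_of_nonpos_of_nonpos hu hw) real_inner_self_nonneg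
  linarith [inner_eq_inner_orthogonalPart_add v u w]

theorem orthogonalPart_ne (hu0 : u ≠ 0) (hw0 : w ≠ 0) (hu : ⟪v, u⟫ ≤ 0) (hw : ⟪v, w⟫ ≤ 0)
    (huw : ⟪u, w⟫ ≤ 0) : orthogonalPart v u ≠ orthogonalPart v w := by
  intro h
  have hdecomp := inner_eq_inner_orthogonalPart_add v u w
  rw [← h, real_inner_self_eq_norm_sq] at hdecomp
  have hprod : 0 ≤ ⟪v, u⟫ * ⟪v, w⟫ / ⟪v, v⟫ :=
    div_nonneg (mul_nonneg_of_nonpos_of_nonpos hu hw) real_inner_self_nonneg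
  have hpart : orthogonalPart v u = 0 := by
    rw [← norm_eq_zero]; nlinarith [norm_nonneg (orthogonalPart v u)]
  have hprod0 : ⟪v, u⟫ * ⟪v, w⟫ / ⟪v, v⟫ = 0 := by
    rw [hpart, norm_zero] at hdecomp; linarith
  have horth : ⟪v, u⟫ = 0 ∨ ⟪v, w⟫ = 0 := by
    rcases div_eq_zero_iff.mp hprod0 with h | h
    · exact mul_eq_zero.mp h
    · exact Or.inl (by simp [inner_self_eq_zero.mp h])
  rcases horth with horth | horth
  · exact hu0 (by rwa [orthogonalPart_eq_self horth] at hpart)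
  · exact hw0 (by rwa [h, orthogonalPart_eq_self horth] at hpart)

end OrthogonalPart

theorem card_le_two_mul_finrank_of_pairwise_inner_nonpos {E : Type*} [NormedAddCommGroup E]
    [InnerProductSpace ℝ E] [FiniteDimensional ℝ E] (S : Finset E) (h0 : (0 : E) ∉ S)
    (hS : (S : Set E).Pairwise fun u w => ⟪u, w⟫ ≤ 0) : #S ≤ 2 * finrank ℝ E := by
  classical
  obtain ⟨d, hd⟩ : ∃ d, finrank ℝ E = d := ⟨_, rfl⟩
  induction d generalizing E with
  | zero =>
    have : Subsingleton E := finrank_zero_iff.mp hd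
    rw [hd, mul_zero, Nat.le_zero, card_eq_zero, eq_empty_iff_forall_notMem]
    exact fun v hv => h0 (Subsingleton.elim v 0 ▸ hv)
  | succ d ih =>
    rcases S.eq_empty_or_nonempty with rfl | ⟨v, hv⟩
    · simp
    have hv0 : v ≠ 0 := ne_of_mem_of_not_mem hv h0
    have hK : finrank ℝ (ℝ ∙ v)ᗮ = d := by
      have := Submodule.finrank_add_finrank_orthogonal (ℝ ∙ v)
      rw [finrank_span_singleton hv0] at this
      omega
    set K := (ℝ ∙ v)ᗮ
    let f : E → K := fun u => ⟨orthogonalPart v u, orthogonalPart_mem_orthogonal v u⟩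
    have hf : Set.InjOn f (S.erase v) := by
      intro a ha b hb hab
      by_contra hne
      rw [mem_coe, mem_erase] at ha hb
      exact orthogonalPart_ne (ne_of_mem_of_not_mem ha.2 h0) (ne_of_mem_of_not_mem hb.2 h0)
        (hS hv ha.2 (Ne.symm ha.1)) (hS hv hb.2 (Ne.symm hb.1)) (hS ha.2 hb.2 hne)
        (congrArg Subtype.val hab)
    have hT := ih (E := K) (((S.erase v).image f).erase 0) (notMem_erase 0 _) ?_ hK
    · have := card_image_of_injOn hf
      have := pred_card_le_card_erase (s := (S.erase v).image f) (a := 0)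
      have := card_erase_add_one hv
      omega
    · intro x hx y hy hxy
      obtain ⟨-, hx⟩ := mem_erase.mp hx
      obtain ⟨-, hy⟩ := mem_erase.mp hy
      obtain ⟨a, ha, rfl⟩ := mem_image.mp hx
      obtain ⟨b, hb, rfl⟩ := mem_image.mp hy
      have hab : a ≠ b := by rintro rfl; exact hxy rfl
      rw [mem_erase] at ha hb
      exact inner_orthogonalPart_nonpos (hS hv ha.2 (Ne.symm ha.1)) (hS hv hb.2 (Ne.symm hb.1))
        (hS ha.2 hb.2 hab)

section OneHot

variable {ι α : Type*} [DecidableEq α]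

noncomputable def oneHot (x : ι → α) : EuclideanSpace ℝ (ι × α) :=
  WithLp.toLp 2 fun p => if x p.1 = p.2 then 1 else 0

theorem oneHot_injective : Function.Injective (oneHot : (ι → α) → EuclideanSpace ℝ (ι × α)) := by
  intro x y hxy
  funext i
  have := congrArg (fun u => u (i, x i)) hxy
  by_contra hne
  simp [oneHot, Ne.symm hne] at this

theorem oneHot_sub_smul_ne_zero [Nonempty ι] {γ : ℝ} (hγ : γ ≠ 1) (x z : ι → α) :
    oneHot x - γ • oneHot z ≠ 0 := by
  intro h
  let i : ι := Classical.arbitrary ι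
  have := congrArg (fun u => u (i, x i)) h
  by_cases hzx : z i = x i <;> simp [oneHot, hzx, sub_eq_zero] at this
  exact hγ this.symm

variable [Fintype ι] [Fintype α]

theorem inner_oneHot (x y : ι → α) :
    ⟪oneHot x, oneHot y⟫ = Fintype.card ι - hammingDist x y := by
  have hcoord (i : ι) : ∑ a : α, (if y i = a then (1 : ℝ) else 0) * (if x i = a then 1 else 0)
      = if x i = y i then 1 else 0 := by
    simp [eq_comm]
  have hsplit : (Fintype.card ι : ℝ) = #{i | x i = y i} + hammingDist x y := by
    rw [hammingDist]; exact_mod_cast (card_filter_add_card_filter_not _).symm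
  simp only [PiLp.inner_apply, oneHot, RCLike.inner_apply, conj_trivial,
    Fintype.sum_prod_type, hcoord, sum_boole]
  linarith

theorem inner_oneHot_sub_smul_nonpos {γ : ℝ} (hγ : 0 ≤ γ) {x y z : ι → α}
    (hx : hammingDist x z ≤ (1 - γ) * Fintype.card ι)
    (hy : hammingDist y z ≤ (1 - γ) * Fintype.card ι)
    (hxy : (1 - γ ^ 2) * Fintype.card ι ≤ hammingDist x y) :
    ⟪oneHot x - γ • oneHot z, oneHot y - γ • oneHot z⟫ ≤ 0 := by
  simp only [inner_sub_left, inner_sub_right, real_inner_smul_left, real_inner_smul_right,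
    inner_oneHot, hammingDist_self, hammingDist_comm z y, Nat.cast_zero]
  nlinarith [mul_le_mul_of_nonneg_left hx hγ, mul_le_mul_of_nonneg_left hy hγ]

end OneHot

theorem johnson_bound {ι α : Type*} [Fintype ι] [Nonempty ι] [Fintype α] [DecidableEq α]
    {γ : ℝ} (hγ0 : 0 ≤ γ) (hγ1 : γ < 1) (C : Set (ι → α))
    (hC : C.Pairwise fun c₁ c₂ => (1 - γ ^ 2) * Fintype.card ι ≤ hammingDist c₁ c₂)
    (z : ι → α) :
    {c ∈ C | hammingDist c z ≤ (1 - γ) * Fintype.card ι}.ncard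
      ≤ 2 * Fintype.card ι * Fintype.card α := by
  let F := (Set.toFinite {c ∈ C | hammingDist c z ≤ (1 - γ) * Fintype.card ι}).toFinset
  let w (c : ι → α) := oneHot c - γ • oneHot z
  have hw : Function.Injective w := fun a b h => oneHot_injective (sub_left_inj.mp h)
  have hbound := card_le_two_mul_finrank_of_pairwise_inner_nonpos (F.image w) ?_ ?_
  · rwa [card_image_of_injective _ hw, finrank_euclideanSpace, Fintype.card_prod, ← mul_assoc,
      ← Set.ncard_eq_toFinset_card] at hbound
  · simp only [mem_image, not_exists, not_and]
    exact fun c _ => oneHot_sub_smul_ne_zero hγ1.ne c z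
  · simp only [coe_image, F, Set.Finite.coe_toFinset]
    rintro _ ⟨a, ⟨haC, ha⟩, rfl⟩ _ ⟨b, ⟨hbC, hb⟩, rfl⟩ hab
    exact inner_oneHot_sub_smul_nonpos hγ0 ha hb (hC haC hbC fun h => hab (h ▸ rfl))

theorem large_distance_implies_list_decodable_general (q n : ℕ) (hn : 0 < n)
    (ε : ℝ) (hε1 : ε < 1)
    (C : Set (Fin n → Fin q))
    (hdist : ∀ c₁ ∈ C, ∀ c₂ ∈ C, c₁ ≠ c₂ → (1 - ε) * n ≤ (hammingDist c₁ c₂ : ℝ))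
    (z : Fin n → Fin q) :
    ({c ∈ C | (hammingDist c z : ℝ) ≤ (1 - Real.sqrt ε) * n}.ncard : ℝ) ≤ 2 * q * n := by
  have : Nonempty (Fin n) := ⟨⟨0, hn⟩⟩
  have hsqrt_lt : Real.sqrt ε < 1 := (Real.sqrt_lt' one_pos).mpr (by rwa [one_pow])
  have hsq : ε ≤ Real.sqrt ε ^ 2 := Real.sq_sqrt' ▸ le_max_left ε 0
  have hC : C.Pairwise fun c₁ c₂ =>
      (1 - Real.sqrt ε ^ 2) * Fintype.card (Fin n) ≤ hammingDist c₁ c₂ := by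
    intro c₁ h₁ c₂ h₂ hne
    rw [Fintype.card_fin]
    exact (mul_le_mul_of_nonneg_right (by linarith) n.cast_nonneg).trans (hdist c₁ h₁ c₂ h₂ hne)
  have hbound := johnson_bound (Real.sqrt_nonneg ε) hsqrt_lt C hC z
  simp only [Fintype.card_fin] at hbound
  rw [mul_right_comm]
  exact_mod_cast hbound

/-- **Johnson bound for large-distance codes.**
If `C ⊆ [q]^n` is a code in which any two distinct codewords are at Hamming distance at
least `(1 − ε)·n` (for some `0 ≤ ε < 1`), then `C` is `(1 − √ε, 2qn)`-list decodable:
for every `z ∈ [q]^n` the number of codewords within Hamming distance `(1 − √ε)·n` of `z`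
is at most `2qn`. -/
theorem large_distance_implies_list_decodable (q n : ℕ) (hq : 0 < q) (hn : 0 < n)
    (ε : ℝ) (hε0 : 0 ≤ ε) (hε1 : ε < 1)
    (C : Set (Fin n → Fin q))
    (hdist : ∀ c₁ ∈ C, ∀ c₂ ∈ C, c₁ ≠ c₂ → (1 - ε) * n ≤ (hammingDist c₁ c₂ : ℝ))
    (z : Fin n → Fin q) :
    ({c ∈ C | (hammingDist c z : ℝ) ≤ (1 - Real.sqrt ε) * n}.ncard : ℝ) ≤ 2 * q * n :=
  large_distance_implies_list_decodable_general q n hn ε hε1 C hdist z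
end

section
/- Let q, k, n be positive integers and 0 ≤ ε < 1 a real number. Let 𝓗 = {h_1, …, h_n} with h_i : [q]^k → [q] be an ε-almost universal hash family, and define H : [q]^k → [q]^n by H(x) = (h_1(x), …, h_n(x)). Then for every z ∈ [q]^n, the number of messages x ∈ [q]^k with Δ(H(x), z) ≤ (1 − √ε)·n is at most 2qn. Equivalently, for every z ∈ [q]^n there are at most 2qn strings x ∈ [q]^k that agree with z on at least a √ε fraction of the n hash values, i.e., with |{i ∈ [n] : h_i(x) = z_i}| ≥ √ε·n. -/
/-!
Write `s = √ε` and embed words over an alphabet of size `q` coordinatewise into `ℝ^(n × q)` by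
`b ↦ q e_b - 𝟙`, so that inner products become affine in the number of agreeing coordinates.
For the members `x` of the list, each agreeing with `z` in at least `s n` places and pairwise in at
most `s² n` places, the vectors `u_x = E(H x) - s E(z)` have squared norm at most
`q² n (1 - s²) - n q (1 - s)²` and pairwise inner products at most `-n q (1 - s)²`.
Nonnegativity of `‖∑ u_x‖²` then gives the Johnson-type bound `M (1 - s) ≤ q (1 + s) ≤ 2q`,
hence `M ≤ 2qn` as soon as the radius `(1 - s) n` is at least `1`. Below that radius the list
consists of exact preimages of `z`, and there is at most one since `ε < 1` makes `H` injective.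
-/

open Finset

section Agreement

variable {ι α β : Type*} [Fintype ι] [DecidableEq α]

def agreement (f g : ι → α) : ℕ := #{i | f i = g i}

theorem agreement_comm (f g : ι → α) : agreement f g = agreement g f := by
  simp only [agreement, eq_comm]

@[simp]
theorem agreement_self (f : ι → α) : agreement f f = Fintype.card ι := by
  simp [agreement]

theorem agreement_add_hammingDist (f g : ι → α) :
    agreement f g + hammingDist f g = Fintype.card ι :=
  card_filter_add_card_filter_not _

theorem agreement_eq_ncard (f g : ι → α) : agreement f g = {i | f i = g i}.ncard := by
  simp only [agreement, ← Set.ncard_coe_finset, coe_filter, mem_univ, true_and]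

theorem mul_card_le_agreement_of_hammingDist_le {f g : ι → α} {s : ℝ}
    (hfg : (hammingDist f g : ℝ) ≤ (1 - s) * Fintype.card ι) :
    s * Fintype.card ι ≤ agreement f g := by
  have hsum : (agreement f g : ℝ) + hammingDist f g = Fintype.card ι := by
    exact_mod_cast agreement_add_hammingDist f g
  linarith

theorem injective_of_agreement_le [Nonempty ι] {c : β → ι → α} {ε : ℝ} (hε : ε < 1)
    (hc : ∀ x y, x ≠ y → (agreement (c x) (c y) : ℝ) ≤ ε * Fintype.card ι) :
    Function.Injective c := fun x y hxy => by
  by_contra hne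
  have hcoll := hc x y hne
  rw [hxy, agreement_self] at hcoll
  nlinarith [(Nat.cast_pos.mpr Fintype.card_pos : (0 : ℝ) < Fintype.card ι)]

theorem card_le_one_of_hammingDist_lt_one {c : β → ι → α} (hc : Function.Injective c)
    (z : ι → α) {S : Finset β} (hS : ∀ x ∈ S, (hammingDist (c x) z : ℝ) < 1) : #S ≤ 1 := by
  have hz : ∀ x ∈ S, c x = z := fun x hx =>
    hammingDist_eq_zero.mp <| Nat.lt_one_iff.mp <| by exact_mod_cast hS x hx
  exact card_le_one.mpr fun x hx y hy => hc ((hz x hx).trans (hz y hy).symm)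

end Agreement

section SimplexEmbedding

variable {ι α : Type*} [Fintype ι] [Fintype α] [DecidableEq α]

def simplexEmbedding (f : ι → α) : ι × α → ℝ :=
  fun p => Fintype.card α * (if f p.1 = p.2 then 1 else 0) - 1

theorem simplexEmbedding_dotProduct (f g : ι → α) :
    simplexEmbedding f ⬝ᵥ simplexEmbedding g =
      (Fintype.card α : ℝ) ^ 2 * agreement f g - Fintype.card ι * Fintype.card α := by
  have coord : ∀ i, ∑ a, simplexEmbedding f (i, a) * simplexEmbedding g (i, a) =
      (Fintype.card α : ℝ) ^ 2 * (if f i = g i then 1 else 0) - Fintype.card α := by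
    intro i
    simp [simplexEmbedding, sub_mul, mul_sub, sum_sub_distrib, mul_ite, ite_mul, sum_ite_eq',
      eq_comm, sq]
  simp only [dotProduct, Fintype.sum_prod_type, coord, sum_sub_distrib, ← mul_sum, sum_boole]
  simp [agreement]

theorem shifted_simplexEmbedding_dotProduct (f g z : ι → α) (s : ℝ) :
    (simplexEmbedding f - s • simplexEmbedding z) ⬝ᵥ (simplexEmbedding g - s • simplexEmbedding z) =
      (Fintype.card α : ℝ) ^ 2 *
          (agreement f g - s * agreement f z - s * agreement z g + s ^ 2 * Fintype.card ι) -
        Fintype.card ι * Fintype.card α * (1 - s) ^ 2 := by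
  simp only [sub_dotProduct, dotProduct_sub, smul_dotProduct, dotProduct_smul,
    simplexEmbedding_dotProduct, agreement_self, smul_eq_mul]
  ring

variable {f g z : ι → α} {s : ℝ}

theorem shifted_simplexEmbedding_dotProduct_self_le (hs : 0 ≤ s)
    (hf : s * Fintype.card ι ≤ agreement f z) :
    (simplexEmbedding f - s • simplexEmbedding z) ⬝ᵥ (simplexEmbedding f - s • simplexEmbedding z) ≤
      (Fintype.card α : ℝ) ^ 2 * Fintype.card ι * (1 - s ^ 2) -
        Fintype.card ι * Fintype.card α * (1 - s) ^ 2 := by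
  rw [shifted_simplexEmbedding_dotProduct, agreement_self, agreement_comm z]
  nlinarith [mul_nonneg (mul_nonneg hs (sub_nonneg.mpr hf)) (sq_nonneg (Fintype.card α : ℝ))]

theorem shifted_simplexEmbedding_dotProduct_le (hs : 0 ≤ s)
    (hf : s * Fintype.card ι ≤ agreement f z) (hg : s * Fintype.card ι ≤ agreement g z)
    (hfg : (agreement f g : ℝ) ≤ s ^ 2 * Fintype.card ι) :
    (simplexEmbedding f - s • simplexEmbedding z) ⬝ᵥ (simplexEmbedding g - s • simplexEmbedding z) ≤
      -(Fintype.card ι * Fintype.card α * (1 - s) ^ 2) := by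
  rw [shifted_simplexEmbedding_dotProduct, agreement_comm z]
  nlinarith [mul_nonneg (mul_nonneg hs (sub_nonneg.mpr hf)) (sq_nonneg (Fintype.card α : ℝ)),
    mul_nonneg (mul_nonneg hs (sub_nonneg.mpr hg)) (sq_nonneg (Fintype.card α : ℝ)),
    mul_nonneg (sub_nonneg.mpr hfg) (sq_nonneg (Fintype.card α : ℝ))]

end SimplexEmbedding

theorem zero_le_card_mul_add_of_dotProduct_le {β κ : Type*} [Fintype κ] (S : Finset β)
    (u : β → κ → ℝ) {D B : ℝ} (hD : ∀ x ∈ S, u x ⬝ᵥ u x ≤ D)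
    (hB : ∀ x ∈ S, ∀ y ∈ S, x ≠ y → u x ⬝ᵥ u y ≤ B) :
    0 ≤ #S * D + #S * (#S - 1) * B := by
  classical
  have row : ∀ x ∈ S, ∑ y ∈ S, u x ⬝ᵥ u y ≤ D + (#S - 1) * B := by
    intro x hx
    rw [← add_sum_erase S _ hx, ← Nat.cast_pred (card_pos.mpr ⟨x, hx⟩), ← card_erase_of_mem hx,
      ← nsmul_eq_mul, ← sum_const]
    gcongr with y hy
    · exact hD x hx
    · exact hB x hx y (mem_of_mem_erase hy) (ne_of_mem_erase hy).symm
  calc 0 ≤ (∑ x ∈ S, u x) ⬝ᵥ (∑ x ∈ S, u x) := by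
        simpa using dotProduct_self_star_nonneg (∑ x ∈ S, u x)
    _ = ∑ x ∈ S, ∑ y ∈ S, u x ⬝ᵥ u y := by
        rw [sum_dotProduct]; simp only [dotProduct_sum]
    _ ≤ ∑ _x ∈ S, (D + (#S - 1) * B) := sum_le_sum row
    _ = #S * D + #S * (#S - 1) * B := by rw [sum_const, nsmul_eq_mul]; ring

section Johnson

variable {ι α β : Type*} [Fintype ι] [Nonempty ι] [Fintype α] [DecidableEq α]

theorem card_mul_one_sub_le_of_agreement (c : β → ι → α) (z : ι → α) (S : Finset β) {s : ℝ}
    (hs0 : 0 ≤ s) (hs1 : s < 1)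
    (hz : ∀ x ∈ S, s * Fintype.card ι ≤ agreement (c x) z)
    (hc : ∀ x ∈ S, ∀ y ∈ S, x ≠ y → (agreement (c x) (c y) : ℝ) ≤ s ^ 2 * Fintype.card ι) :
    #S * (1 - s) ≤ Fintype.card α * (1 + s) := by
  rcases S.eq_empty_or_nonempty with rfl | ⟨x₀, hx₀⟩
  · simp only [card_empty, CharP.cast_eq_zero, zero_mul]
    positivity
  have : Nonempty α := ⟨c x₀ (Classical.arbitrary ι)⟩
  have hn : (0 : ℝ) < Fintype.card ι := by exact_mod_cast Fintype.card_pos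
  have hq : (0 : ℝ) < Fintype.card α := by exact_mod_cast Fintype.card_pos
  have hM : (0 : ℝ) < #S := by exact_mod_cast card_pos.mpr ⟨x₀, hx₀⟩
  have gram := zero_le_card_mul_add_of_dotProduct_le S
    (fun x => simplexEmbedding (c x) - s • simplexEmbedding z)
    (fun x hx => shifted_simplexEmbedding_dotProduct_self_le hs0 (hz x hx))
    (fun x hx y hy hxy =>
      shifted_simplexEmbedding_dotProduct_le hs0 (hz x hx) (hz y hy) (hc x hx y hy hxy))
  have factored : 0 ≤ (#S * Fintype.card ι * Fintype.card α * (1 - s)) *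
      (Fintype.card α * (1 + s) - #S * (1 - s)) := by
    linarith
  have hgap := nonneg_of_mul_nonneg_right factored (by have := sub_pos.mpr hs1; positivity)
  linarith

end Johnson

theorem au_list_decodable_general (q k n : ℕ) (hq : 0 < q) (hn : 0 < n)
    (ε : ℝ) (hε0 : 0 ≤ ε) (hε1 : ε < 1)
    (h : Fin n → (Fin k → Fin q) → Fin q)
    (hau : ∀ x y : Fin k → Fin q, x ≠ y →
      ({i : Fin n | h i x = h i y}.ncard : ℝ) ≤ ε * n)
    (z : Fin n → Fin q) :
    ({x : Fin k → Fin q |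
        (hammingDist (fun i => h i x) z : ℝ) ≤ (1 - Real.sqrt ε) * n}.ncard : ℝ)
      ≤ 2 * q * n := by
  set s := Real.sqrt ε
  have hs0 : 0 ≤ s := Real.sqrt_nonneg ε
  have hs1 : s < 1 := (Real.sqrt_lt' one_pos).mpr (by simpa using hε1)
  have hs2 : s ^ 2 = ε := Real.sq_sqrt hε0
  have : Nonempty (Fin n) := Fin.pos_iff_nonempty.mp hn
  let H : (Fin k → Fin q) → Fin n → Fin q := fun x i => h i x
  have hcoll : ∀ x y, x ≠ y → (agreement (H x) (H y) : ℝ) ≤ s ^ 2 * Fintype.card (Fin n) := by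
    intro x y hxy
    simpa [H, hs2, agreement_eq_ncard] using hau x y hxy
  let S : Finset (Fin k → Fin q) := {x | (hammingDist (H x) z : ℝ) ≤ (1 - s) * n}
  have hcard : {x | (hammingDist (H x) z : ℝ) ≤ (1 - s) * n}.ncard = #S := by
    simp only [S, ← Set.ncard_coe_finset, coe_filter, mem_univ, true_and]
  rw [hcard]
  rcases lt_or_ge ((1 - s) * n) 1 with hsmall | hlarge
  · have hS : #S ≤ 1 := card_le_one_of_hammingDist_lt_one
      (injective_of_agreement_le (by nlinarith) hcoll) z
      fun x hx => (mem_filter.mp hx).2.trans_lt hsmall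
    have hqn : 1 ≤ q * n := Nat.one_le_iff_ne_zero.mpr (by positivity)
    calc (#S : ℝ) ≤ 1 := by exact_mod_cast hS
      _ ≤ 2 * q * n := by norm_cast; rw [mul_assoc]; omega
  · have johnson := card_mul_one_sub_le_of_agreement H z S hs0 hs1
      (fun x hx => mul_card_le_agreement_of_hammingDist_le (by simpa using (mem_filter.mp hx).2))
      (fun x _ y _ hxy => hcoll x y hxy)
    rw [Fintype.card_fin] at johnson
    calc (#S : ℝ) ≤ #S * ((1 - s) * n) := le_mul_of_one_le_right (by positivity) hlarge
      _ = #S * (1 - s) * n := by ring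
      _ ≤ q * (1 + s) * n := by gcongr
      _ ≤ q * 2 * n := by gcongr; linarith
      _ = 2 * q * n := by ring

/-- **List decodability of the code associated to an almost universal hash family.**
If `𝓗 = {h_1, …, h_n}`, `h_i : [q]^k → [q]`, is an `ε`-almost universal hash family with
`0 ≤ ε < 1` and `H(x) = (h_1(x), …, h_n(x))`, then for every `z ∈ [q]^n` the number of
messages `x ∈ [q]^k` with `Δ(H(x), z) ≤ (1 − √ε)·n` (equivalently, agreeing with `z` on at
least `√ε·n` of the hash values) is at most `2qn`. -/
theorem au_list_decodable (q k n : ℕ) (hq : 0 < q) (hk : 0 < k) (hn : 0 < n)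
    (ε : ℝ) (hε0 : 0 ≤ ε) (hε1 : ε < 1)
    (h : Fin n → (Fin k → Fin q) → Fin q)
    (hau : ∀ x y : Fin k → Fin q, x ≠ y →
      ({i : Fin n | h i x = h i y}.ncard : ℝ) ≤ ε * n)
    (z : Fin n → Fin q) :
    ({x : Fin k → Fin q |
        (hammingDist (fun i => h i x) z : ℝ) ≤ (1 - Real.sqrt ε) * n}.ncard : ℝ)
      ≤ 2 * q * n :=
  au_list_decodable_general q k n hq hn ε hε0 hε1 h hau z
end

section
/- (List decodability of the full Reed-Solomon code.) Let q be a prime power, F_q the finite field with q elements, 1 ≤ k ≤ q, and ε > 0 a real number with k − 1 ≤ ε²·q. For x ∈ F_q^k let P_x(Y) = x_0 + x_1·Y + ⋯ + x_{k−1}·Y^{k−1}. Then for every function z : F_q → F_q, the number of messages x ∈ F_q^k such that |{β ∈ F_q : P_x(β) = z(β)}| ≥ ε·q is at most 2q². In other words, the Reed–Solomon code x ↦ (P_x(β))_{β ∈ F_q} is (1 − ε, 2q²)-list decodable. -/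
/-!
The Johnson-bound argument. Send a message `x` to `v x = 1_{graph P_x} - δ • 1_{graph z}` in
`ℝ^(F × F)`, so that `v x ⬝ᵥ v y = agree(P_x, P_y) - δ agree(P_x, z) - δ agree(P_y, z) + δ² q`.
Distinct polynomials of degree `< k` agree in at most `k - 1 ≤ δ² q` points, so on the list the
vectors `v x` have pairwise non-positive inner products, and there are at most
`2 dim = 2 q²` such nonzero vectors. They are nonzero as long as `δ < 1`, which is why `ε` is
first lowered below `1`.
-/

open Finset

section ObtuseFamily

variable {ι α : Type*} [Fintype α] [DecidableEq ι]

theorem card_le_two_mul_card_of_unit_of_dotProduct_nonpos (A : Finset ι) (u : ι → α → ℝ)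
    (hunit : ∀ i ∈ A, u i ⬝ᵥ u i = 1) (hobtuse : ∀ i ∈ A, ∀ j ∈ A, i ≠ j → u i ⬝ᵥ u j ≤ 0) :
    #A ≤ 2 * Fintype.card α := by
  -- `M = ∑ uᵢ uᵢᵀ` has trace `#A`, and its squared Frobenius norm `∑ (uᵢ ⬝ᵥ uⱼ)²` is at most
  -- `2 #A` because `c² ≤ -c` for `c ∈ [-1, 0]`; compare via `(tr M)² ≤ |α| ∑ M_pp²`.
  set M : α → α → ℝ := fun p p' => ∑ i ∈ A, u i p * u i p'
  have trace : ∑ p, M p p = #A := by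
    rw [sum_comm]
    exact (sum_congr rfl hunit).trans (by simp)
  have frobenius : ∑ p, ∑ p', M p p' ^ 2 = ∑ i ∈ A, ∑ j ∈ A, (u i ⬝ᵥ u j) ^ 2 := by
    simp only [M, dotProduct, sq, sum_mul_sum]
    simp_rw [sum_comm (s := (univ : Finset α)) (t := A)]
    exact sum_congr rfl fun i _ => sum_congr rfl fun j _ =>
      sum_congr rfl fun p _ => sum_congr rfl fun p' _ => by ring
  have gram_sum_nonneg : 0 ≤ ∑ i ∈ A, ∑ j ∈ A, u i ⬝ᵥ u j := by
    simp only [← dotProduct_sum, ← sum_dotProduct]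
    exact sum_nonneg fun p _ => mul_self_nonneg _
  have gram_entry : ∀ i ∈ A, ∀ j ∈ A,
      (u i ⬝ᵥ u j) ^ 2 ≤ 2 * (if i = j then 1 else 0) - u i ⬝ᵥ u j := by
    intro i hi j hj
    by_cases hij : i = j
    · subst hij
      norm_num [hunit i hi]
    · have cauchy_schwarz : (u i ⬝ᵥ u j) ^ 2 ≤ (u i ⬝ᵥ u i) * (u j ⬝ᵥ u j) := by
        simpa only [dotProduct, ← sq] using sum_mul_sq_le_sq_mul_sq univ (u i) (u j)
      rw [hunit i hi, hunit j hj] at cauchy_schwarz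
      simp only [hij, if_false]
      nlinarith [hobtuse i hi j hj hij]
  have gram_sq_sum : ∑ i ∈ A, ∑ j ∈ A, (u i ⬝ᵥ u j) ^ 2 ≤ 2 * #A := by
    calc _ ≤ ∑ i ∈ A, ∑ j ∈ A, (2 * (if i = j then 1 else 0) - u i ⬝ᵥ u j) :=
          sum_le_sum fun i hi => sum_le_sum fun j hj => gram_entry i hi j hj
      _ = 2 * #A - ∑ i ∈ A, ∑ j ∈ A, u i ⬝ᵥ u j := by
          simp [sum_sub_distrib, mul_comm]
      _ ≤ 2 * #A := by linarith
  have diag_le : ∑ p, M p p ^ 2 ≤ ∑ p, ∑ p', M p p' ^ 2 :=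
    sum_le_sum fun p _ => single_le_sum (f := fun p' => M p p' ^ 2)
      (fun _ _ => sq_nonneg _) (mem_univ p)
  have card_sq_le : (#A : ℝ) ^ 2 ≤ Fintype.card α * (2 * #A) := by
    calc (#A : ℝ) ^ 2 = (∑ p, M p p) ^ 2 := by rw [trace]
      _ ≤ Fintype.card α * ∑ p, M p p ^ 2 := sq_sum_le_card_mul_sum_sq
      _ ≤ Fintype.card α * (2 * #A) := by
          gcongr
          linarith
  rcases (#A).eq_zero_or_pos with h | h
  · simp [h]
  · have : (0 : ℝ) < #A := by exact_mod_cast h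
    exact_mod_cast (show (#A : ℝ) ≤ 2 * Fintype.card α by nlinarith)

theorem card_le_two_mul_card_of_dotProduct_nonpos (A : Finset ι) (v : ι → α → ℝ)
    (hv : ∀ i ∈ A, v i ≠ 0) (hobtuse : ∀ i ∈ A, ∀ j ∈ A, i ≠ j → v i ⬝ᵥ v j ≤ 0) :
    #A ≤ 2 * Fintype.card α := by
  have hpos : ∀ i ∈ A, 0 < v i ⬝ᵥ v i := fun i hi =>
    (sum_nonneg fun p _ => mul_self_nonneg (v i p)).lt_of_ne'
      (dotProduct_self_eq_zero.not.2 (hv i hi))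
  refine card_le_two_mul_card_of_unit_of_dotProduct_nonpos A
    (fun i => (√(v i ⬝ᵥ v i))⁻¹ • v i) (fun i hi => ?_) (fun i hi j hj hij => ?_)
  · simp only [smul_dotProduct, dotProduct_smul, smul_eq_mul, ← mul_assoc, ← mul_inv,
      Real.mul_self_sqrt (hpos i hi).le, inv_mul_cancel₀ (hpos i hi).ne']
  · simp only [smul_dotProduct, dotProduct_smul, smul_eq_mul]
    exact mul_nonpos_of_nonneg_of_nonpos (by positivity)
      (mul_nonpos_of_nonneg_of_nonpos (by positivity) (hobtuse i hi j hj hij))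

end ObtuseFamily

section Johnson

variable {ι α β : Type*} [Fintype α] [Fintype β] [DecidableEq β]

def graphIndicator (f : α → β) : α × β → ℝ := fun p => if f p.1 = p.2 then 1 else 0

theorem graphIndicator_dotProduct (f g : α → β) :
    graphIndicator f ⬝ᵥ graphIndicator g = #{a | f a = g a} := by
  rw [dotProduct, Fintype.sum_prod_type, ← sum_boole]
  refine sum_congr rfl fun a _ => ?_
  simp [graphIndicator]

theorem card_list_le_of_pairwise_agree_le [Nonempty α] [DecidableEq ι] (c : ι → α → β)
    (z : α → β) (A : Finset ι) (δ : ℝ) (hδ0 : 0 ≤ δ) (hδ1 : δ < 1)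
    (hc : ∀ i ∈ A, ∀ j ∈ A, i ≠ j → (#{a | c i a = c j a} : ℝ) ≤ δ ^ 2 * Fintype.card α)
    (hz : ∀ i ∈ A, δ * Fintype.card α ≤ #{a | c i a = z a}) :
    #A ≤ 2 * Fintype.card α * Fintype.card β := by
  set n : ℝ := (Fintype.card α : ℝ)
  set v : ι → α × β → ℝ := fun i => graphIndicator (c i) - δ • graphIndicator z
  have hdot : ∀ i j, v i ⬝ᵥ v j
      = #{a | c i a = c j a} - δ * #{a | c i a = z a} - δ * #{a | c j a = z a} + δ ^ 2 * n := by
    intro i j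
    simp only [v, sub_dotProduct, dotProduct_sub, smul_dotProduct, dotProduct_smul,
      dotProduct_comm (graphIndicator z) (graphIndicator (c j)), graphIndicator_dotProduct,
      filter_true, card_univ, smul_eq_mul]
    ring
  have hagree_le : ∀ i, (#{a | c i a = z a} : ℝ) ≤ n := fun i =>
    Nat.cast_le.2 ((card_filter_le univ _).trans_eq card_univ)
  have hn : 0 < n := by positivity
  rw [mul_assoc, ← Fintype.card_prod]
  refine card_le_two_mul_card_of_dotProduct_nonpos A v (fun i hi => ?_) (fun i hi j hj hij => ?_)
  · rw [Ne, ← dotProduct_self_eq_zero, hdot, filter_true_of_mem fun a _ => rfl, card_univ]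
    nlinarith [hagree_le i, mul_pos hn (mul_pos (sub_pos.2 hδ1) (sub_pos.2 hδ1))]
  · rw [hdot]
    nlinarith [hc i hi j hj hij, mul_le_mul_of_nonneg_left (hz i hi) hδ0,
      mul_le_mul_of_nonneg_left (hz j hj) hδ0]

end Johnson

-- `a ≤ n - 1 < (1 - 1/(2n))² n`, so `δ = min ε (1 - 1/(2n))` works
theorem exists_mem_Ico_le_and_le_sq_mul {ε n a : ℝ} (hε : 0 ≤ ε) (hn : 1 ≤ n)
    (haε : a ≤ ε ^ 2 * n) (han : a ≤ n - 1) : ∃ δ ∈ Set.Ico 0 1, δ ≤ ε ∧ a ≤ δ ^ 2 * n := by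
  refine ⟨min ε (1 - 1 / (2 * n)), ⟨le_min hε ?_, (min_le_right _ _).trans_lt ?_⟩,
    min_le_left _ _, ?_⟩
  · rw [sub_nonneg, div_le_one (by positivity)]
    linarith
  · exact sub_lt_self _ (by positivity)
  · rcases min_choice ε (1 - 1 / (2 * n)) with h | h <;> rw [h]
    · exact haε
    · have hsq : (1 - 1 / (2 * n)) ^ 2 * n = n - 1 + 1 / (4 * n) := by
        field_simp
        ring
      rw [hsq]
      linarith [(by positivity : 0 < 1 / (4 * n))]

open Polynomial

section ReedSolomon

variable {F : Type*} [Field F] {k : ℕ}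

def rsEncode (x : Fin k → F) (β : F) : F := ∑ i, x i * β ^ (i : ℕ)

theorem eval_ofFn_eq_rsEncode [DecidableEq F] (x : Fin k → F) (β : F) :
    (ofFn k x).eval β = rsEncode x β := by
  simp [ofFn_eq_sum_monomial, eval_finsetSum, rsEncode]

theorem card_agree_rsEncode_lt_of_ne [Fintype F] [DecidableEq F] {x y : Fin k → F}
    (hxy : x ≠ y) : #{β | rsEncode x β = rsEncode y β} < k := by
  by_contra! hk
  refine hxy <| injective_ofFn k <| eq_of_degrees_lt_of_eval_finset_eq
    {β | rsEncode x β = rsEncode y β} ?_ ?_ fun β hβ => ?_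
  · exact (ofFn_degree_lt x).trans_le (by exact_mod_cast hk)
  · exact (ofFn_degree_lt y).trans_le (by exact_mod_cast hk)
  · simpa [eval_ofFn_eq_rsEncode] using hβ

end ReedSolomon

theorem reed_solomon_list_decodable_general (F : Type*) [Field F] [Fintype F]
    (k : ℕ) (hkq : k ≤ Fintype.card F)
    (ε : ℝ) (hε : 0 < ε) (hkε : (k : ℝ) - 1 ≤ ε ^ 2 * Fintype.card F)
    (z : F → F) :
    ({x : Fin k → F |
        ε * Fintype.card F ≤ ({β : F | ∑ i, x i * β ^ (i : ℕ) = z β}.ncard : ℝ)}.ncard : ℝ)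
      ≤ 2 * (Fintype.card F : ℝ) ^ 2 := by
  classical
  obtain ⟨δ, ⟨hδ0, hδ1⟩, hδε, hkδ⟩ := exists_mem_Ico_le_and_le_sq_mul hε.le
    (Nat.one_le_cast.2 Fintype.card_pos) hkε (by linarith [(Nat.cast_le.2 hkq : (k : ℝ) ≤ _)])
  simp only [Set.ncard_eq_toFinset_card', Set.toFinset_ofPred]
  calc (#{x : Fin k → F | ε * Fintype.card F ≤ #{β | rsEncode x β = z β}} : ℝ)
      ≤ #{x : Fin k → F | δ * Fintype.card F ≤ #{β | rsEncode x β = z β}} :=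
        Nat.cast_le.2 <| card_le_card <| monotone_filter_right _ fun _ _ h =>
          le_trans (by gcongr) h
    _ ≤ (2 * Fintype.card F * Fintype.card F : ℕ) := by
        refine Nat.cast_le.2 (card_list_le_of_pairwise_agree_le rsEncode z _ δ hδ0 hδ1
          (fun x _ y _ hxy => ?_) fun x hx => (mem_filter.1 hx).2)
        have hagree : (#{β | rsEncode x β = rsEncode y β} : ℝ) + 1 ≤ k := by
          exact_mod_cast card_agree_rsEncode_lt_of_ne hxy
        linarith
    _ = 2 * (Fintype.card F : ℝ) ^ 2 := by push_cast; ring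

/-- **List decodability of the full Reed–Solomon code (via the Johnson bound).**
Let `F` be a finite field with `q` elements, `1 ≤ k ≤ q`, and `ε > 0` with
`k − 1 ≤ ε²·q`.  For `x ∈ F^k` let `P_x(Y) = ∑ i, x_i·Y^i`.  Then for every received
word `z : F → F`, the number of messages `x` whose codeword `(P_x(β))_{β ∈ F}` agrees
with `z` on at least `ε·q` positions is at most `2q²`; i.e. the Reed–Solomon code is
`(1 − ε, 2q²)`-list decodable. -/
theorem reed_solomon_list_decodable (F : Type*) [Field F] [Fintype F] [DecidableEq F]
    (k : ℕ) (hk1 : 1 ≤ k) (hkq : k ≤ Fintype.card F)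
    (ε : ℝ) (hε : 0 < ε) (hkε : (k : ℝ) - 1 ≤ ε ^ 2 * Fintype.card F)
    (z : F → F) :
    ({x : Fin k → F |
        ε * Fintype.card F ≤ ({β : F | ∑ i, x i * β ^ (i : ℕ) = z β}.ncard : ℝ)}.ncard : ℝ)
      ≤ 2 * (Fintype.card F : ℝ) ^ 2 :=
  reed_solomon_list_decodable_general F k hkq ε hε hkε z
end

section
/- Let q ≥ 2 be an integer and ε a real number with 0 < ε < 1/q. Then the q-ary entropy function satisfies H_q(1 − 1/q − ε) ≤ 1 − C_q·ε², where C_q = q/(4·ln q). -/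
/-- The `q`-ary entropy function
`H_q(x) = x·log_q(q−1) − x·log_q(x) − (1−x)·log_q(1−x)`. -/
noncomputable def qaryEntropy (q : ℕ) (x : ℝ) : ℝ :=
  x * Real.logb q ((q : ℝ) - 1) - x * Real.logb q x - (1 - x) * Real.logb q (1 - x)

/-!
In natural units, `H(x) = x ln (q - 1) - x ln x - (1 - x) ln (1 - x)` attains its maximum `ln q`
at `p = 1 - 1/q`, where its derivative `H'(x) = ln ((q - 1)(1 - x) / x)` vanishes. On
`[p - 1/q, p]` one has `(q - 1)(1 - x) ≤ 2`, so `ln y ≥ 1 - 1/y` gives `H'(x) ≥ (q/2)(p - x)`.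
Hence `H(x) + (q/4)(p - x)²` is monotone there, which yields `H(p - ε) ≤ ln q - (q/4) ε²`;
dividing by `ln q` passes to base `q`.
-/

open Real hiding qaryEntropy
open Set

lemma qaryEntropy_eq_div_log (q : ℕ) (x : ℝ) :
    qaryEntropy q x = Real.qaryEntropy q x / log q := by
  simp only [qaryEntropy, Real.qaryEntropy, binEntropy, logb, log_inv]
  push_cast
  ring

lemma Real.qaryEntropy_one_sub_inv (q : ℕ) : Real.qaryEntropy q (1 - 1 / q) = log q := by
  rcases eq_or_ne (q : ℝ) 0 with hq | hq
  · simp [hq]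
  rcases eq_or_ne (q : ℝ) 1 with h1 | h1
  · simp [h1]
  have hsub : 1 - 1 / (q : ℝ) = ((q : ℝ) - 1) / q := by field_simp
  simp only [Real.qaryEntropy, binEntropy, sub_sub_cancel, log_inv, Int.cast_sub, Int.cast_natCast,
    Int.cast_one]
  rw [hsub, log_div (sub_ne_zero.2 h1) hq, one_div, log_inv]
  field_simp
  ring

lemma Real.half_mul_sub_le_log_add_log_sub_log {q x : ℝ} (hq : 1 < q) (hx₀ : 0 < x)
    (hlo : 1 - 2 / q ≤ x) (hhi : x ≤ 1 - 1 / q) :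
    q / 2 * (1 - 1 / q - x) ≤ log (q - 1) + log (1 - x) - log x := by
  have hq₀ : 0 < q := by linarith
  have hq₁ : 0 < q - 1 := by linarith
  have hx₁ : 0 < 1 - x := by
    have : 0 < 1 / q := by positivity
    linarith
  have hlog : log ((q - 1) * (1 - x) / x) = log (q - 1) + log (1 - x) - log x := by
    rw [log_div, log_mul] <;> positivity
  have hle : (q - 1) * (1 - x) ≤ 2 := by
    have : 1 - x ≤ 2 / q := by linarith
    calc (q - 1) * (1 - x) ≤ (q - 1) * (2 / q) := by gcongr
      _ ≤ 2 := by rw [mul_div_assoc', div_le_iff₀ hq₀]; linarith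
  calc q / 2 * (1 - 1 / q - x) ≤ q * (1 - 1 / q - x) / ((q - 1) * (1 - x)) := by
        rw [div_mul_eq_mul_div, mul_comm]
        gcongr
    _ = 1 - ((q - 1) * (1 - x) / x)⁻¹ := by field_simp; ring
    _ ≤ log (q - 1) + log (1 - x) - log x :=
      hlog ▸ one_sub_inv_le_log_of_pos (by positivity)

lemma Real.qaryEntropy_one_sub_inv_sub_add_sq_le {q : ℕ} (hq : 2 ≤ q) {ε : ℝ}
    (hε₀ : 0 ≤ ε) (hε₁ : ε ≤ 1 / q) :
    Real.qaryEntropy q (1 - 1 / q - ε) + q / 4 * ε ^ 2 ≤ log q := by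
  have hq' : (1 : ℝ) < q := by exact_mod_cast hq
  set p : ℝ := 1 - 1 / q
  let ψ : ℝ → ℝ := fun x ↦ Real.qaryEntropy q x + q / 4 * (p - x) ^ 2
  have hmem : ∀ x ∈ interior (Icc (p - ε) p), 0 < x ∧ 1 - 2 / q ≤ x ∧ x < p := by
    rw [interior_Icc]
    rintro x ⟨hx₀, hx₁⟩
    have h2q : (2 : ℝ) / q = 1 / q + 1 / q := by ring
    have h2q_le : (2 : ℝ) / q ≤ 1 := by rw [div_le_one₀ (by linarith)]; exact_mod_cast hq
    exact ⟨by linarith, by linarith, hx₁⟩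
  have hψ : MonotoneOn ψ (Icc (p - ε) p) := by
    refine monotoneOn_of_hasDerivWithinAt_nonneg (convex_Icc _ _) (by fun_prop)
      (f' := fun x ↦ log (q - 1) + log (1 - x) - log x - q / 2 * (p - x)) ?_ ?_
    · intro x hx
      obtain ⟨hx₀, -, hxp⟩ := hmem x hx
      have hx₁ : x ≠ 1 := by linarith [show 0 < 1 / (q : ℝ) by positivity]
      have hH := hasDerivAt_qaryEntropy (q := q) hx₀.ne' hx₁
      have hsq := ((hasDerivAt_id x).const_sub p).pow 2 |>.const_mul ((q : ℝ) / 4)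
      refine (hH.add hsq).hasDerivWithinAt.congr_deriv ?_
      simp only [id]
      ring
    · intro x hx
      obtain ⟨hx₀, hlo, hxp⟩ := hmem x hx
      linarith [half_mul_sub_le_log_add_log_sub_log hq' hx₀ hlo hxp.le]
  calc Real.qaryEntropy q (p - ε) + q / 4 * ε ^ 2
      = ψ (p - ε) := by simp only [ψ, sub_sub_cancel]
    _ ≤ ψ p := hψ (left_mem_Icc.2 (by linarith)) (right_mem_Icc.2 (by linarith)) (by linarith)
    _ = log q := by
      simp only [ψ, sub_self, zero_pow two_ne_zero, mul_zero, add_zero]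
      exact qaryEntropy_one_sub_inv q

/-- For every integer `q ≥ 2` and real `0 < ε < 1/q`, the `q`-ary entropy function
satisfies `H_q(1 − 1/q − ε) ≤ 1 − C_q·ε²` where `C_q = q/(4·ln q)`. -/
theorem qaryEntropy_bound (q : ℕ) (hq : 2 ≤ q) (ε : ℝ) (hε0 : 0 < ε) (hε1 : ε < 1 / q) :
    qaryEntropy q (1 - 1 / q - ε) ≤ 1 - ((q : ℝ) / (4 * Real.log q)) * ε ^ 2 := by
  have hlog : 0 < log q := log_pos (by exact_mod_cast hq)
  have h := qaryEntropy_one_sub_inv_sub_add_sq_le hq hε0.le hε1.le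
  rw [qaryEntropy_eq_div_log, div_le_iff₀ hlog]
  calc Real.qaryEntropy q (1 - 1 / q - ε) ≤ log q - q / 4 * ε ^ 2 := by linarith
    _ = (1 - q / (4 * log q) * ε ^ 2) * log q := by field_simp
end

section
/- For every integer n ≥ 2, the n-th prime number p_n (with p_1 = 2, p_2 = 3, …) satisfies p_n ≤ 2·n·log₂(n). -/
/-!
Chebyshev's lower bound `π x ≥ ((x - 1) log 2 - log (x + 2)) / log x` (`Chebyshev.pi_ge'`) gives
at least `n` primes up to `x = 2 n log₂ n` as soon as `n ≥ 16`: writing `L = log₂ n ≥ 4`, we have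
`log₂ x = 1 + L + log₂ L ≤ 1 + 3L/2`, so `n log₂ x` stays below `x - 1 - log₂ (x + 2) ≈ 2nL`.
The cases `n < 16` are checked by computation.
-/

open Real
open scoped Nat.Prime

theorem logb_two_le_half_of_four_le {y : ℝ} (hy : 4 ≤ y) : logb 2 y ≤ y / 2 := by
  have hlog_y : log y = 2 * log 2 + log (y / 4) := by
    rw [log_div (by linarith) (by norm_num), show (4 : ℝ) = 2 ^ 2 by norm_num, log_pow]
    push_cast; ring
  rw [logb, div_le_iff₀ (Real.log_pos one_lt_two), hlog_y]
  nlinarith [log_le_sub_one_of_pos (show 0 < y / 4 by linarith), log_two_gt_d9]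

theorem Nat.nth_prime_le_of_lt_primeCounting {k m : ℕ} (h : k < π m) : nth Prime k ≤ m :=
  Nat.lt_succ_iff.mp (nth_lt_of_lt_count h)

theorem nth_prime_le_of_mul_logb_le {k : ℕ} {x : ℝ} (hx : 1 < x)
    (h : (k + 1) * logb 2 x ≤ x - 1 - logb 2 (x + 2)) : (Nat.nth Nat.Prime k : ℝ) ≤ x := by
  have hlog2 := Real.log_pos (one_lt_two : (1 : ℝ) < 2)
  have hcount : (k + 1 : ℝ) ≤ π ⌊x⌋₊ := by
    refine le_trans ?_ (Chebyshev.pi_ge' hx)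
    rw [le_div_iff₀ (Real.log_pos hx)]
    have h_log := mul_le_mul_of_nonneg_right h hlog2.le
    simp only [logb, sub_mul, mul_assoc, div_mul_cancel₀ _ hlog2.ne'] at h_log
    linarith
  have hk : k < π ⌊x⌋₊ := by exact_mod_cast (lt_add_one (k : ℝ)).trans_le hcount
  calc (Nat.nth Nat.Prime k : ℝ) ≤ ⌊x⌋₊ := mod_cast Nat.nth_prime_le_of_lt_primeCounting hk
    _ ≤ x := Nat.floor_le (by linarith)

theorem mul_logb_two_mul_self_mul_logb_le {y : ℝ} (hy : 16 ≤ y) :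
    y * logb 2 (2 * y * logb 2 y) ≤ 2 * y * logb 2 y - 1 - logb 2 (2 * y * logb 2 y + 2) := by
  set L := logb 2 y
  set x := 2 * y * L
  have hL : 4 ≤ L := by
    rw [le_logb_iff_rpow_le one_lt_two (by linarith)]
    norm_num; linarith
  have hlog_x : logb 2 x = 1 + L + logb 2 L := by
    rw [logb_mul (by positivity) (by positivity), logb_mul (by norm_num) (by positivity),
      logb_self_eq_one one_lt_two]
  have hlog_x_add : logb 2 (x + 2) ≤ 1 + logb 2 x := by
    calc logb 2 (x + 2) ≤ logb 2 (2 * x) :=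
          logb_le_logb_of_le one_lt_two (by positivity) (by nlinarith)
      _ = 1 + logb 2 x := by
          rw [logb_mul (by norm_num) (by positivity), logb_self_eq_one one_lt_two]
  have hlog_L := logb_two_le_half_of_four_le hL
  rw [hlog_x] at hlog_x_add ⊢
  nlinarith [mul_le_mul_of_nonneg_left hlog_L (by linarith : 0 ≤ y),
    mul_nonneg (sub_nonneg.2 hy) (sub_nonneg.2 hL)]

theorem le_primeCounting_two_mul_log_of_lt_sixteen :
    ∀ n, 2 ≤ n → n < 16 → n ≤ π (2 * n * Nat.log 2 n) := by
  decide

/-- For every `n ≥ 2`, the `n`-th prime `p_n` (with `p_1 = 2`, so `p_n` is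
`Nat.nth Nat.Prime (n − 1)`) satisfies `p_n ≤ 2·n·log₂ n`. -/
theorem nth_prime_upper_bound (n : ℕ) (hn : 2 ≤ n) :
    (Nat.nth Nat.Prime (n - 1) : ℝ) ≤ 2 * n * Real.logb 2 n := by
  rcases lt_or_ge n 16 with hsmall | hlarge
  · have hp := Nat.nth_prime_le_of_lt_primeCounting
      (Nat.sub_one_lt_of_le (by omega) (le_primeCounting_two_mul_log_of_lt_sixteen n hn hsmall))
    calc (Nat.nth Nat.Prime (n - 1) : ℝ) ≤ (2 * n * Nat.log 2 n : ℕ) := mod_cast hp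
      _ ≤ 2 * n * logb 2 n := by push_cast; gcongr; exact natLog_le_logb n 2
  · have hn_real : (16 : ℝ) ≤ n := mod_cast hlarge
    have hL : 1 ≤ logb 2 n := by
      rw [le_logb_iff_rpow_le one_lt_two (by linarith)]
      norm_num; linarith
    apply nth_prime_le_of_mul_logb_le (by nlinarith)
    rw [Nat.cast_pred (by omega), sub_add_cancel]
    exact mul_logb_two_mul_self_mul_logb_le hn_real
end
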